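/- arXiv:0806.1325 — 2 statements merged into one kernel-verified Lean document; each statement's English description precedes it below -/
import Mathlib

section
/- For every s > 0, the second derivative of f at s satisfies f''(s) = −G(s) / ((β+1)·α^β·s²·(1+s)), and in particular f''(s) < 0. -/
open Real

noncomputable def fFJ (α β : ℝ) (s : ℝ) : ℝ :=
  (1 / ((β + 1) * α ^ β)) * ∫ x in (0:ℝ)..s, ((α + Real.log (1 + x)) ^ (β + 1) - α ^ (β + 1)) / x

noncomputable def GFJ (α β : ℝ) (x : ℝ) : ℝ :=
  (α + Real.log (1 + x)) ^ (β + 1) * (1 + x) - (β + 1) * x * (α + Real.log (1 + x)) ^ β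
    - α ^ (β + 1) * (1 + x)

/-!
Writing `φ(x) = (α + log (1 + x)) ^ (β + 1)`, the integrand of `f` is the slope of `φ` at `0`, whose
singularity at `0` is removable because `φ` is differentiable there (`dslope φ 0` is continuous).
Hence `f' = c · slope φ 0` on `(0, ∞)` with `c = 1 / ((β + 1) α ^ β)`, and the formula for `f''` is
the quotient rule.

For the sign, substitute `t = log (1 + s)`: then `G(s) = (1 + s) H(t)` with
`H(t) = (α + t) ^ (β + 1) - α ^ (β + 1) - (β + 1) (α + t) ^ β (1 - e ^ (-t))`.
Since `H(0) = 0` and `H'(t) = (β + 1) (1 - e ^ (-t)) (α + t) ^ (β - 1) (α + t - β) > 0` for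
`t > 0`, as `α + t > β`, both `H` and `G` are positive.
-/

open Set Filter Topology MeasureTheory

theorem HasDerivAt.hasDerivAt_slope {𝕜 : Type*} [NontriviallyNormedField 𝕜] {f : 𝕜 → 𝕜}
    {f' a x : 𝕜} (hf : HasDerivAt f f' x) (hx : x ≠ a) :
    HasDerivAt (slope f a) ((f' * (x - a) - (f x - f a)) / (x - a) ^ 2) x := by
  have hslope : slope f a = fun y => (f y - f a) / (y - a) := funext (slope_def_field f a)
  rw [hslope]
  simpa using (hf.sub_const (f a)).fun_div ((hasDerivAt_id x).sub_const a) (sub_ne_zero.2 hx)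

noncomputable def phiFJ (α β : ℝ) (x : ℝ) : ℝ := (α + log (1 + x)) ^ (β + 1)

lemma phiFJ_zero (α β : ℝ) : phiFJ α β 0 = α ^ (β + 1) := by
  simp [phiFJ]

lemma hasDerivAt_phiFJ {α β x : ℝ} (hα : 0 < α) (hx : 0 ≤ x) :
    HasDerivAt (phiFJ α β) ((β + 1) * (α + log (1 + x)) ^ β / (1 + x)) x := by
  have hbase : 0 < α + log (1 + x) := by linarith [log_nonneg (by linarith : (1 : ℝ) ≤ 1 + x)]
  have hlog : HasDerivAt (fun y => α + log (1 + y)) (1 / (1 + x)) x := by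
    simpa using (((hasDerivAt_id x).const_add 1).log (by positivity)).const_add α
  refine (hlog.rpow_const (p := β + 1) (Or.inl hbase.ne')).congr_deriv ?_
  rw [add_sub_cancel_right]
  ring

lemma continuousOn_phiFJ (α : ℝ) {β : ℝ} (hβ : -1 < β) : ContinuousOn (phiFJ α β) (Ioi (-1)) := by
  intro x hx
  have h1x : 1 + x ≠ 0 := by rw [mem_Ioi] at hx; linarith
  exact ((continuous_rpow_const (by linarith)).continuousAt.comp
    (continuousAt_const.add ((continuousAt_log h1x).comp (by fun_prop)))).continuousWithinAt

lemma fFJ_eq_integral_dslope (α β : ℝ) :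
    fFJ α β = fun s => (1 / ((β + 1) * α ^ β)) * ∫ x in (0:ℝ)..s, dslope (phiFJ α β) 0 x := by
  funext s
  rw [fFJ]
  congr 1
  refine intervalIntegral.integral_congr_ae ((Measure.ae_ne volume 0).mono fun x hx _ => ?_)
  rw [dslope_of_ne _ hx, slope_def_field, phiFJ_zero, sub_zero]
  rfl

lemma hasDerivAt_fFJ {α β x : ℝ} (hα : 0 < α) (hβ : -1 < β) (hx : -1 < x) :
    HasDerivAt (fFJ α β) ((1 / ((β + 1) * α ^ β)) * dslope (phiFJ α β) 0 x) x := by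
  have hcont : ContinuousOn (dslope (phiFJ α β) 0) (Ioi (-1)) :=
    (continuousOn_dslope (Ioi_mem_nhds (by norm_num))).2
      ⟨continuousOn_phiFJ α hβ, (hasDerivAt_phiFJ hα le_rfl).differentiableAt⟩
  have hsub : uIcc 0 x ⊆ Ioi (-1) := fun y hy => (lt_min (by norm_num) hx).trans_le hy.1
  rw [fFJ_eq_integral_dslope]
  exact (intervalIntegral.integral_hasDerivAt_right ((hcont.mono hsub).intervalIntegrable)
    (hcont.stronglyMeasurableAtFilter isOpen_Ioi x hx)
    (hcont.continuousAt (Ioi_mem_nhds hx))).const_mul _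

noncomputable def HFJ (α β : ℝ) (t : ℝ) : ℝ :=
  (α + t) ^ (β + 1) - α ^ (β + 1) - (β + 1) * (α + t) ^ β * (1 - exp (-t))

lemma GFJ_eq_mul_HFJ (α β : ℝ) {s : ℝ} (hs : -1 < s) :
    GFJ α β s = (1 + s) * HFJ α β (log (1 + s)) := by
  have h1s : 0 < 1 + s := by linarith
  rw [GFJ, HFJ, exp_neg, exp_log h1s]
  field_simp
  ring

lemma hasDerivAt_HFJ {α β t : ℝ} (hαt : 0 < α + t) :
    HasDerivAt (HFJ α β) ((β + 1) * (1 - exp (-t)) * (α + t) ^ (β - 1) * (α + t - β)) t := by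
  have hlin : HasDerivAt (fun u => α + u) 1 t := by simpa using (hasDerivAt_id t).const_add α
  have hpow (p : ℝ) : HasDerivAt (fun u => (α + u) ^ p) (p * (α + t) ^ (p - 1)) t := by
    simpa using hlin.rpow_const (p := p) (Or.inl hαt.ne')
  have hexp : HasDerivAt (fun u => 1 - exp (-u)) (exp (-t)) t := by
    simpa using ((hasDerivAt_neg t).exp).const_sub 1
  refine ((((hpow (β + 1)).sub_const _).sub (((hpow β).const_mul (β + 1)).mul hexp))).congr_deriv ?_
  rw [add_sub_cancel_right, rpow_sub_one hαt.ne']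
  field_simp
  ring

lemma HFJ_pos {α β t : ℝ} (hα : 0 < α) (hβ : -1 < β) (hβα : β ≤ α) (ht : 0 < t) :
    0 < HFJ α β t := by
  have hmono : StrictMonoOn (HFJ α β) (Ici 0) := by
    refine strictMonoOn_of_deriv_pos (convex_Ici 0) (fun u hu => ?_) fun u hu => ?_
    · rw [mem_Ici] at hu
      exact (hasDerivAt_HFJ (by linarith)).continuousAt.continuousWithinAt
    · rw [interior_Ici, mem_Ioi] at hu
      rw [(hasDerivAt_HFJ (by linarith)).deriv]
      have hexp : 0 < 1 - exp (-u) := by linarith [exp_lt_one_iff.2 (neg_lt_zero.2 hu)]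
      have hpow : 0 < (α + u) ^ (β - 1) := rpow_pos_of_pos (by linarith) _
      have hlin : 0 < α + u - β := by linarith
      have hβ1 : 0 < β + 1 := by linarith
      positivity
  simpa [HFJ] using hmono self_mem_Ici ht.le ht

lemma GFJ_pos {α β s : ℝ} (hα : 0 < α) (hβ : -1 < β) (hβα : β ≤ α) (hs : 0 < s) :
    0 < GFJ α β s := by
  rw [GFJ_eq_mul_HFJ α β (by linarith)]
  exact mul_pos (by linarith) (HFJ_pos hα hβ hβα (log_pos (by linarith)))

lemma hasDerivAt_deriv_fFJ {α β s : ℝ} (hα : 0 < α) (hβ : -1 < β) (hs : 0 < s) :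
    HasDerivAt (deriv (fFJ α β)) (-GFJ α β s / ((β + 1) * α ^ β * s ^ 2 * (1 + s))) s := by
  have hderiv :
      deriv (fFJ α β) =ᶠ[𝓝 s] fun x => (1 / ((β + 1) * α ^ β)) * slope (phiFJ α β) 0 x := by
    filter_upwards [Ioi_mem_nhds hs] with x hx
    rw [(hasDerivAt_fFJ hα hβ (by rw [mem_Ioi] at hx; linarith)).deriv, dslope_of_ne _ hx.ne']
  refine ((((hasDerivAt_phiFJ hα hs.le).hasDerivAt_slope hs.ne').const_mul _).congr_of_eventuallyEq
    hderiv).congr_deriv ?_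
  have hβ1 : β + 1 ≠ 0 := by linarith
  have hαβ : α ^ β ≠ 0 := (rpow_pos_of_pos hα β).ne'
  have h1s : 1 + s ≠ 0 := by linarith
  rw [phiFJ_zero, phiFJ, GFJ, sub_zero]
  field_simp
  ring

theorem stmt_5 (α β : ℝ) (hβ : 0 ≤ β) (hαβ : β < α) (s : ℝ) (hs : 0 < s) :
    deriv (deriv (fFJ α β)) s = -GFJ α β s / ((β + 1) * α ^ β * s ^ 2 * (1 + s)) ∧
    deriv (deriv (fFJ α β)) s < 0 := by
  have hα : 0 < α := hβ.trans_lt hαβ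
  have hβ' : -1 < β := by linarith
  rw [(hasDerivAt_deriv_fFJ hα hβ' hs).deriv]
  refine ⟨rfl, div_neg_of_neg_of_pos (neg_neg_of_pos (GFJ_pos hα hβ' hαβ.le hs)) ?_⟩
  have := rpow_pos_of_pos hα β
  positivity
end

section
/- There exist constants 0 < c ≤ C and r₀ > 1 such that for all r ≥ r₀, c·ρ(r)^(2(β+1)n/(β+2)) ≤ V(r) ≤ C·ρ(r)^(2(β+1)n/(β+2)). -/
/-!
Write `A(r) = α + log (1 + r²)` (`logWeight`). After cancelling `t^(2n-2)`, the integrand of `V`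
is the derivative of `((A^(β+1) - α^(β+1)) / ((β+1) α^β))^n / (2n)`, so `V ≍ A^((β+1)n)`.
On `[1, ∞)` the integrand of `ρ` is comparable with the derivative of `A^(β/2+1)`, because
`1/√(1+t²) ≤ 2t/(1+t²) ≤ 2/√(1+t²)` there; hence `ρ ≍ A^(β/2+1)`, and raising this to the power
`2(β+1)n/(β+2)` gives `ρ^(2(β+1)n/(β+2)) ≍ A^((β+1)n) ≍ V`.
-/

open Real

noncomputable def rhoFJ (α β : ℝ) (r : ℝ) : ℝ :=
  ∫ t in (0:ℝ)..r, Real.sqrt ((α + Real.log (1 + t ^ 2)) ^ β / (α ^ β * (1 + t ^ 2)))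

noncomputable def VFJ (n : ℕ) (α β : ℝ) (r : ℝ) : ℝ :=
  ∫ t in (0:ℝ)..r,
    ((α + Real.log (1 + t ^ 2)) ^ β / (α ^ β * (1 + t ^ 2))) *
      (((α + Real.log (1 + t ^ 2)) ^ (β + 1) - α ^ (β + 1)) / ((β + 1) * α ^ β * t ^ 2))
        ^ (n - 1) * t ^ (2 * n - 1)

open Filter Asymptotics intervalIntegral MeasureTheory

lemma Asymptotics.IsTheta.exists_two_sided_bounds_atTop {f g : ℝ → ℝ} (h : f =Θ[atTop] g)
    (hf : 0 ≤ᶠ[atTop] f) (hg : 0 ≤ᶠ[atTop] g) (a : ℝ) :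
    ∃ c C r₀ : ℝ, 0 < c ∧ c ≤ C ∧ a < r₀ ∧
      ∀ r, r₀ ≤ r → c * g r ≤ f r ∧ f r ≤ C * g r := by
  obtain ⟨C, -, hfg⟩ := h.isBigO.exists_pos
  obtain ⟨c, hc, hgf⟩ := h.symm.isBigO.exists_pos
  obtain ⟨r₀, hr₀⟩ := eventually_atTop.1
    (hfg.bound.and <| hgf.bound.and <| hf.and <| hg.and <| eventually_gt_atTop a)
  refine ⟨c⁻¹, max C c⁻¹, r₀, inv_pos.2 hc, le_max_right _ _, (hr₀ r₀ le_rfl).2.2.2.2,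
    fun r hr => ?_⟩
  obtain ⟨hfg, hgf, hf, hg, -⟩ := hr₀ r hr
  rw [Real.norm_of_nonneg hf, Real.norm_of_nonneg hg] at hfg hgf
  constructor
  · rwa [inv_mul_le_iff₀ hc]
  · exact hfg.trans (mul_le_mul_of_nonneg_right (le_max_left _ _) hg)

lemma Asymptotics.isTheta_add_const_of_tendsto_norm {ι : Type*} {l : Filter ι} {u : ι → ℝ}
    (hu : Tendsto (norm ∘ u) l atTop) (c : ℝ) : (fun x => u x + c) =Θ[l] u :=
  (IsEquivalent.refl.add_const_of_norm_tendsto_atTop hu).isTheta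

lemma intervalIntegral.isTheta_integral_of_le_of_le {f g : ℝ → ℝ} {a c C : ℝ}
    (hf : Continuous f) (hg : Continuous g) (hc : 0 < c) (hg₀ : ∀ t, a ≤ t → 0 ≤ g t)
    (hlow : ∀ t, a ≤ t → c * g t ≤ f t) (hup : ∀ t, a ≤ t → f t ≤ C * g t) :
    (fun r => ∫ t in a..r, f t) =Θ[atTop] fun r => ∫ t in a..r, g t := by
  have hbounds : ∀ r, a ≤ r →
      0 ≤ ∫ t in a..r, g t ∧ c * ∫ t in a..r, g t ≤ ∫ t in a..r, f t ∧
        ∫ t in a..r, f t ≤ C * ∫ t in a..r, g t := by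
    intro r hr
    rw [← integral_const_mul, ← integral_const_mul]
    exact ⟨integral_nonneg hr fun t ht => hg₀ t ht.1,
      integral_mono_on hr ((hg.intervalIntegrable _ _).const_mul c) (hf.intervalIntegrable _ _)
        fun t ht => hlow t ht.1,
      integral_mono_on hr (hf.intervalIntegrable _ _) ((hg.intervalIntegrable _ _).const_mul C)
        fun t ht => hup t ht.1⟩
  refine ⟨IsBigO.of_bound C ?_, IsBigO.of_bound c⁻¹ ?_⟩ <;>
    filter_upwards [eventually_ge_atTop a] with r hr <;>
    obtain ⟨hg₀, hlow, hup⟩ := hbounds r hr <;>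
    rw [Real.norm_of_nonneg hg₀, Real.norm_of_nonneg (by nlinarith)]
  · exact hup
  · exact (le_inv_mul_iff₀ hc).2 hlow

lemma inv_sqrt_one_add_sq_le {t : ℝ} (ht : 1 ≤ t) :
    (√(1 + t ^ 2))⁻¹ ≤ 2 * t / (1 + t ^ 2) := by
  have hs : 0 < √(1 + t ^ 2) := by positivity
  have hs2 := Real.sq_sqrt (by positivity : (0 : ℝ) ≤ 1 + t ^ 2)
  set s := √(1 + t ^ 2)
  rw [← hs2, le_div_iff₀ (by positivity), sq, ← mul_assoc, inv_mul_cancel₀ hs.ne', one_mul]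
  nlinarith

lemma div_one_add_sq_le_inv_sqrt {t : ℝ} (ht : 0 ≤ t) :
    t / (1 + t ^ 2) ≤ (√(1 + t ^ 2))⁻¹ := by
  have hs : 0 < √(1 + t ^ 2) := by positivity
  have hs2 := Real.sq_sqrt (by positivity : (0 : ℝ) ≤ 1 + t ^ 2)
  set s := √(1 + t ^ 2)
  rw [← hs2, div_le_iff₀ (by positivity), sq, ← mul_assoc, inv_mul_cancel₀ hs.ne', one_mul]
  nlinarith

-- Also at `t = 0`, where both sides vanish (for `m ≠ 0` through `x / 0 = 0`).
lemma div_mul_sq_pow_mul_pow_two_mul_add_one (x y t : ℝ) (m : ℕ) :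
    (x / (y * t ^ 2)) ^ m * t ^ (2 * m + 1) = (x / y) ^ m * t := by
  rcases eq_or_ne t 0 with rfl | ht
  · simp
  · rw [pow_succ t (2 * m), pow_mul, div_pow, div_pow, mul_pow]
    field_simp

lemma hasDerivAt_log_one_add_sq (t : ℝ) :
    HasDerivAt (fun t => Real.log (1 + t ^ 2)) (2 * t / (1 + t ^ 2)) t := by
  simpa using ((hasDerivAt_pow 2 t).const_add 1).log (by positivity)

noncomputable def logWeight (α t : ℝ) : ℝ := α + Real.log (1 + t ^ 2)

section logWeight

variable {α : ℝ}

lemma le_logWeight (α t : ℝ) : α ≤ logWeight α t :=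
  le_add_of_nonneg_right (Real.log_nonneg (by nlinarith))

lemma logWeight_pos (hα : 0 < α) (t : ℝ) : 0 < logWeight α t :=
  hα.trans_le (le_logWeight α t)

lemma logWeight_zero (α : ℝ) : logWeight α 0 = α := by simp [logWeight]

lemma tendsto_logWeight_atTop (α : ℝ) : Tendsto (logWeight α) atTop atTop :=
  tendsto_atTop_add_const_left _ α <| Real.tendsto_log_atTop.comp <|
    tendsto_atTop_add_const_left _ 1 (tendsto_pow_atTop two_ne_zero)

lemma tendsto_logWeight_rpow_atTop (α : ℝ) {p : ℝ} (hp : 0 < p) :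
    Tendsto (fun t => logWeight α t ^ p) atTop atTop :=
  (tendsto_rpow_atTop hp).comp (tendsto_logWeight_atTop α)

lemma continuous_logWeight_rpow (hα : 0 < α) (p : ℝ) : Continuous fun t => logWeight α t ^ p :=
  (continuous_const.add ((by fun_prop : Continuous fun t : ℝ => 1 + t ^ 2).log
    fun t => by positivity)).rpow_const fun t => Or.inl (logWeight_pos hα t).ne'

lemma hasDerivAt_logWeight_rpow (hα : 0 < α) (p t : ℝ) :
    HasDerivAt (fun t => logWeight α t ^ p)
      (2 * t / (1 + t ^ 2) * p * logWeight α t ^ (p - 1)) t :=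
  ((hasDerivAt_log_one_add_sq t).const_add α).rpow_const (Or.inl (logWeight_pos hα t).ne')

end logWeight

section volume

variable {α β : ℝ}

theorem VFJ_eq (hα : 0 < α) (hβ : β + 1 ≠ 0) {n : ℕ} (hn : 1 ≤ n) (r : ℝ) :
    VFJ n α β r =
      ((logWeight α r ^ (β + 1) - α ^ (β + 1)) / ((β + 1) * α ^ β)) ^ n / (2 * n) := by
  obtain ⟨m, rfl⟩ : ∃ m, n = m + 1 := ⟨n - 1, by omega⟩
  set E := (β + 1) * α ^ β
  set P := fun t => logWeight α t ^ (β + 1) - α ^ (β + 1)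
  set dV := fun t => (P t / E) ^ m * (logWeight α t ^ β * t / (α ^ β * (1 + t ^ 2)))
  have hderiv :
      ∀ t, HasDerivAt (fun t => (P t / E) ^ (m + 1) / (2 * (m + 1 : ℕ))) (dV t) t := by
    intro t
    have h := ((((hasDerivAt_logWeight_rpow hα (β + 1) t).sub_const (α ^ (β + 1))).div_const
      E).fun_pow (m + 1)).div_const (2 * (m + 1 : ℕ))
    refine h.congr_deriv ?_
    simp only [dV, P, E, add_tsub_cancel_right]
    field_simp
  have hdV : Continuous dV := by
    have hαβ := Real.rpow_pos_of_pos hα β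
    have hden : Continuous fun t : ℝ => α ^ β * (1 + t ^ 2) := by fun_prop
    exact ((((continuous_logWeight_rpow hα (β + 1)).sub continuous_const).div_const E).pow m).mul
      (((continuous_logWeight_rpow hα β).mul continuous_id).div hden fun t => by positivity)
  rw [VFJ, integral_congr (g := dV) fun t _ => ?_,
    integral_eq_sub_of_hasDerivAt (fun t _ => hderiv t) (hdV.intervalIntegrable _ _)]
  · simp [P, logWeight_zero]
  · simp only [dV, P, logWeight, add_tsub_cancel_right,
      show 2 * (m + 1) - 1 = 2 * m + 1 by omega]
    rw [mul_assoc, div_mul_sq_pow_mul_pow_two_mul_add_one]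
    ring

lemma VFJ_nonneg (hα : 0 < α) (hβ : 0 < β + 1) {n : ℕ} (hn : 1 ≤ n) (r : ℝ) :
    0 ≤ VFJ n α β r := by
  rw [VFJ_eq hα hβ.ne' hn]
  have := Real.rpow_le_rpow hα.le (le_logWeight α r) hβ.le
  have := Real.rpow_pos_of_pos hα β
  exact div_nonneg (pow_nonneg (div_nonneg (by linarith) (by positivity)) n) (by positivity)

theorem VFJ_isTheta (hα : 0 < α) (hβ : 0 < β + 1) {n : ℕ} (hn : 1 ≤ n) :
    VFJ n α β =Θ[atTop] fun r => logWeight α r ^ ((β + 1) * n) := by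
  set K := (((β + 1) * α ^ β) ^ n * (2 * n))⁻¹
  have hK : K ≠ 0 := by
    have := Real.rpow_pos_of_pos hα β
    have : (0 : ℝ) < n := by exact_mod_cast hn
    positivity
  have hV : VFJ n α β = fun r => K * (logWeight α r ^ (β + 1) - α ^ (β + 1)) ^ n := by
    ext r
    rw [VFJ_eq hα hβ.ne' hn, div_pow]
    ring
  have hP : (fun r => logWeight α r ^ (β + 1) - α ^ (β + 1)) =Θ[atTop]
      fun r => logWeight α r ^ (β + 1) := by
    simp_rw [sub_eq_add_neg]
    exact isTheta_add_const_of_tendsto_norm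
      (tendsto_norm_atTop_atTop.comp (tendsto_logWeight_rpow_atTop α hβ)) _
  have hpow :
      (fun r => (logWeight α r ^ (β + 1)) ^ n) = fun r => logWeight α r ^ ((β + 1) * n) :=
    funext fun r => by rw [Real.rpow_mul (logWeight_pos hα r).le, Real.rpow_natCast]
  rw [hV, isTheta_const_mul_left hK, ← hpow]
  exact hP.pow n

end volume

section radius

variable {α β : ℝ}

noncomputable def rhoIntegrand (α β t : ℝ) : ℝ :=
  √(logWeight α t ^ β / (α ^ β * (1 + t ^ 2)))

lemma continuous_rhoIntegrand (hα : 0 < α) : Continuous (rhoIntegrand α β) := by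
  have hden : Continuous fun t : ℝ => α ^ β * (1 + t ^ 2) := by fun_prop
  have := Real.rpow_pos_of_pos hα β
  exact ((continuous_logWeight_rpow hα β).div hden fun t => by positivity).sqrt

lemma rhoIntegrand_eq (hα : 0 < α) (t : ℝ) :
    rhoIntegrand α β t = logWeight α t ^ (β / 2) / α ^ (β / 2) * (√(1 + t ^ 2))⁻¹ := by
  have hsqrt : ∀ x : ℝ, 0 ≤ x → √(x ^ β) = x ^ (β / 2) := fun x hx => by
    rw [Real.sqrt_eq_rpow, ← Real.rpow_mul hx]
    ring_nf
  rw [rhoIntegrand, Real.sqrt_div (Real.rpow_nonneg (logWeight_pos hα t).le β),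
    Real.sqrt_mul (Real.rpow_nonneg hα.le β), hsqrt _ (logWeight_pos hα t).le, hsqrt _ hα.le]
  ring

lemma rhoFJ_nonneg {r : ℝ} (hr : 0 ≤ r) : 0 ≤ rhoFJ α β r :=
  integral_nonneg hr fun _ _ => Real.sqrt_nonneg _

theorem isTheta_integral_rhoIntegrand (hα : 0 < α) (hβ : 0 < β / 2 + 1) :
    (fun r => ∫ t in (1 : ℝ)..r, rhoIntegrand α β t) =Θ[atTop]
      fun r => logWeight α r ^ (β / 2 + 1) := by
  set q := β / 2 + 1
  set K := q * α ^ (β / 2)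
  have hK : 0 < K := mul_pos hβ (Real.rpow_pos_of_pos hα _)
  set w := fun t => logWeight α t ^ (β / 2) / α ^ (β / 2)
  have hw : ∀ t, 0 ≤ w t := fun t =>
    div_nonneg (Real.rpow_nonneg (logWeight_pos hα t).le _) (Real.rpow_nonneg hα.le _)
  set dG := fun t => 2 * t / (1 + t ^ 2) * q * logWeight α t ^ (q - 1)
  have hdG : Continuous dG := by
    have hk : Continuous fun t : ℝ => 2 * t / (1 + t ^ 2) :=
      by fun_prop (disch := intro; positivity)
    exact (hk.mul continuous_const).mul (continuous_logWeight_rpow hα _)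
  have hdG_eq : ∀ t, dG t = K * (w t * (2 * t / (1 + t ^ 2))) := fun t => by
    simp only [dG, K, w, q, add_sub_cancel_right]
    field_simp
  have hcmp : (fun r => ∫ t in (1 : ℝ)..r, rhoIntegrand α β t) =Θ[atTop]
      fun r => ∫ t in (1 : ℝ)..r, dG t := by
    refine isTheta_integral_of_le_of_le (continuous_rhoIntegrand hα) hdG (c := (2 * K)⁻¹)
      (C := K⁻¹) (by positivity) (fun t ht => ?_) (fun t ht => ?_) (fun t ht => ?_)
    · rw [hdG_eq]
      exact mul_nonneg hK.le (mul_nonneg (hw t) (by positivity))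
    · rw [hdG_eq, rhoIntegrand_eq hα, show (2 * K)⁻¹ * (K * (w t * (2 * t / (1 + t ^ 2))))
        = w t * (t / (1 + t ^ 2)) by field_simp]
      exact mul_le_mul_of_nonneg_left (div_one_add_sq_le_inv_sqrt (by linarith)) (hw t)
    · rw [hdG_eq, rhoIntegrand_eq hα, inv_mul_cancel_left₀ hK.ne']
      exact mul_le_mul_of_nonneg_left (inv_sqrt_one_add_sq_le ht) (hw t)
  have hFTC : ∀ r, ∫ t in (1 : ℝ)..r, dG t = logWeight α r ^ q + -logWeight α 1 ^ q :=
    fun r => by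
      rw [← sub_eq_add_neg]
      exact integral_eq_sub_of_hasDerivAt (fun t _ => hasDerivAt_logWeight_rpow hα q t)
        (hdG.intervalIntegrable _ _)
  simp_rw [hFTC] at hcmp
  exact hcmp.trans (isTheta_add_const_of_tendsto_norm
    (tendsto_norm_atTop_atTop.comp (tendsto_logWeight_rpow_atTop α hβ)) _)

theorem rhoFJ_isTheta (hα : 0 < α) (hβ : 0 < β / 2 + 1) :
    rhoFJ α β =Θ[atTop] fun r => logWeight α r ^ (β / 2 + 1) := by
  have htail := isTheta_integral_rhoIntegrand hα hβ
  have hρ : rhoFJ α β = fun r => (∫ t in (1 : ℝ)..r, rhoIntegrand α β t) +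
      ∫ t in (0 : ℝ)..1, rhoIntegrand α β t := by
    ext r
    have hi := (continuous_rhoIntegrand (β := β) hα).intervalIntegrable (μ := volume)
    rw [add_comm, integral_add_adjacent_intervals (hi 0 1) (hi 1 r)]
    rfl
  rw [hρ]
  exact (isTheta_add_const_of_tendsto_norm (htail.tendsto_norm_atTop_iff.2
    (tendsto_norm_atTop_atTop.comp (tendsto_logWeight_rpow_atTop α hβ))) _).trans htail

end radius

theorem stmt_16 (n : ℕ) (hn : 2 ≤ n) (α β : ℝ) (hβ : 0 ≤ β) (hαβ : β < α) :
    ∃ c C r₀ : ℝ, 0 < c ∧ c ≤ C ∧ 1 < r₀ ∧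
      ∀ r : ℝ, r₀ ≤ r →
        c * rhoFJ α β r ^ (2 * (β + 1) * n / (β + 2)) ≤ VFJ n α β r ∧
        VFJ n α β r ≤ C * rhoFJ α β r ^ (2 * (β + 1) * n / (β + 2)) := by
  have hα : 0 < α := hβ.trans_lt hαβ
  have hρ := (rhoFJ_isTheta (β := β) hα (by linarith)).rpow (r := 2 * (β + 1) * n / (β + 2))
    ((eventually_ge_atTop 0).mono fun r hr => rhoFJ_nonneg hr)
    (Eventually.of_forall fun r => Real.rpow_nonneg (logWeight_pos hα r).le _)
  have hexp : ∀ r, (logWeight α r ^ (β / 2 + 1)) ^ (2 * (β + 1) * n / (β + 2)) =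
      logWeight α r ^ ((β + 1) * n) := fun r => by
    rw [← Real.rpow_mul (logWeight_pos hα r).le]
    congr 1
    field_simp
  simp_rw [hexp] at hρ
  exact ((VFJ_isTheta hα (by linarith) (by omega)).trans hρ.symm).exists_two_sided_bounds_atTop
    (Eventually.of_forall (VFJ_nonneg hα (by linarith) (by omega)))
    ((eventually_ge_atTop 0).mono fun r hr => Real.rpow_nonneg (rhoFJ_nonneg hr) _) 1
end
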